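/- Assume J₁₁ > 0, J₁₂ < 0, set λ_M = J₁₁ − J₁₂, λ_m = J₁₁ + J₁₂, suppose λ_m > 0, and let β̌ ∈ (0,1) be a solution of β̌·artanh(√(1−β̌))/√(1−β̌) = λ_m/λ_M. If β > 2/(β̌·λ_M), then f(x̃,−x̃) > f(x̂,x̂), where x̃ is the unique solution in (0,1) of x = tanh((βλ_M/2)·x) and x̂ is the unique solution in (0,1) of x = tanh((βλ_m/2)·x). -/

import Mathlib

/-- The entropy function 𝓘(x) = ((1+x)log(1+x) + (1-x)log(1-x))/2.
Note `Real.log 0 = 0` in Mathlib, which implements the convention 0·log 0 = 0. -/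
noncomputable def entI (x : ℝ) : ℝ :=
  ((1 + x) * Real.log (1 + x) + (1 - x) * Real.log (1 - x)) / 2

/-- Pressure functional of the symmetric zero-field bipartite mean-field model
(α₁ = α₂ = 1/2, J₁₁ = J₂₂, h₁ = h₂ = 0). -/
noncomputable def fSym (β J11 J12 : ℝ) (μ : ℝ × ℝ) : ℝ :=
  β / 8 * (J11 * (μ.1 ^ 2 + μ.2 ^ 2) + 2 * J12 * μ.1 * μ.2) - (entI μ.1 + entI μ.2) / 2

/-- A critical point of f: a point of the open square (−1,1)² where both partial
derivatives of f vanish. -/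
def IsCritPt (β J11 J12 : ℝ) (μ : ℝ × ℝ) : Prop :=
  μ.1 ∈ Set.Ioo (-1 : ℝ) 1 ∧ μ.2 ∈ Set.Ioo (-1 : ℝ) 1 ∧
    deriv (fun x => fSym β J11 J12 (x, μ.2)) μ.1 = 0 ∧
    deriv (fun y => fSym β J11 J12 (μ.1, y)) μ.2 = 0

/-- The inverse hyperbolic tangent, artanh(x) = (1/2)·log((1+x)/(1−x)). -/
noncomputable def artanh (x : ℝ) : ℝ := (1 / 2) * Real.log ((1 + x) / (1 - x))

/-!
On the antidiagonal, `f(x, -x) = φ(x) := (βλ_M/4) x² - 𝓘(x)`, and `φ'(x) = (βλ_M/2) x - artanh x`.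
Since `artanh` is strictly convex on `[0, 1)` and vanishes at `0`, the slope `artanh x / x` is
increasing, so `φ'` is positive before the fixed point `x̃` (where `artanh x̃ = (βλ_M/2) x̃`) and
negative after it: `x̃` maximises `φ` on `[0, 1)`. Finally
`f(x̂, x̂) = φ(x̂) + (βJ₁₂/2) x̂² < φ(x̂) ≤ φ(x̃)` because `J₁₂ < 0`.
-/

open Set

theorem Real.hasDerivAt_artanh {x : ℝ} (hx : x ∈ Ioo (-1) 1) :
    HasDerivAt Real.artanh (1 - x ^ 2)⁻¹ x := by
  have hp : 0 < 1 + x := by linarith [hx.1]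
  have hm : 0 < 1 - x := by linarith [hx.2]
  have hlog : ∀ᶠ y in nhds x, Real.artanh y = 1 / 2 * Real.log ((1 + y) / (1 - y)) :=
    Filter.mem_of_superset (isOpen_Ioo.mem_nhds hx)
      fun y hy => Real.artanh_eq_half_log (Ioo_subset_Icc_self hy)
  have hquot := ((hasDerivAt_id x).const_add 1).div ((hasDerivAt_id x).const_sub 1) hm.ne'
  refine ((hquot.log (div_pos hp hm).ne').const_mul (1 / 2)).congr_of_eventuallyEq hlog
    |>.congr_deriv ?_
  simp only [id, Pi.div_apply]
  rw [show (1 : ℝ) - x ^ 2 = (1 + x) * (1 - x) by ring]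
  field_simp
  ring

theorem Real.strictConvexOn_artanh : StrictConvexOn ℝ (Ico 0 1) Real.artanh := by
  have hsub : Ico (0 : ℝ) 1 ⊆ Ioo (-1) 1 := fun x hx => ⟨by linarith [hx.1], hx.2⟩
  refine StrictMonoOn.strictConvexOn_of_deriv (convex_Ico 0 1)
    (fun x hx => (Real.hasDerivAt_artanh (hsub hx)).continuousAt.continuousWithinAt) ?_
  rw [interior_Ico]
  intro x hx y hy hxy
  rw [(Real.hasDerivAt_artanh (hsub (Ioo_subset_Ico_self hx))).deriv,
    (Real.hasDerivAt_artanh (hsub (Ioo_subset_Ico_self hy))).deriv]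
  exact inv_strictAnti₀ (by nlinarith [hy.2, hy.1]) (by nlinarith [hx.1])

theorem Real.strictMonoOn_artanh_div_self :
    StrictMonoOn (fun x => Real.artanh x / x) (Ioo 0 1) := by
  intro x hx y hy hxy
  have h := Real.strictConvexOn_artanh.secant_strict_mono (a := 0) ⟨le_rfl, one_pos⟩
    (Ioo_subset_Ico_self hx) (Ioo_subset_Ico_self hy) hx.1.ne' hy.1.ne' hxy
  simpa using h

theorem hasDerivAt_entI {x : ℝ} (hx : x ∈ Ioo (-1) 1) : HasDerivAt entI (Real.artanh x) x := by
  have hp : 0 < 1 + x := by linarith [hx.1]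
  have hm : 0 < 1 - x := by linarith [hx.2]
  have hplus := (Real.hasDerivAt_mul_log hp.ne').comp x ((hasDerivAt_id x).const_add 1)
  have hminus := (Real.hasDerivAt_mul_log hm.ne').comp x ((hasDerivAt_id x).const_sub 1)
  refine ((hplus.add hminus).div_const 2).congr_deriv ?_
  rw [Real.artanh_eq_half_log (Ioo_subset_Icc_self hx), Real.log_div hp.ne' hm.ne']
  ring

theorem entI_neg (x : ℝ) : entI (-x) = entI x := by
  simp only [entI, sub_neg_eq_add, ← sub_eq_add_neg]
  ring

theorem fSym_diag (β J11 J12 x : ℝ) :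
    fSym β J11 J12 (x, x) = β * (J11 + J12) / 4 * x ^ 2 - entI x := by
  simp only [fSym]
  ring

theorem fSym_antidiag (β J11 J12 x : ℝ) :
    fSym β J11 J12 (x, -x) = β * (J11 - J12) / 4 * x ^ 2 - entI x := by
  simp only [fSym, entI_neg]
  ring

theorem Real.artanh_lt_mul_of_lt {A x y : ℝ} (hx : x ∈ Ioo 0 1) (hy : y ∈ Ioo 0 1) (hxy : x < y)
    (hfix : Real.artanh y = A * y) : Real.artanh x < A * x := by
  have hslope : Real.artanh x / x < Real.artanh y / y :=
    Real.strictMonoOn_artanh_div_self hx hy hxy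
  rwa [hfix, mul_div_cancel_right₀ _ hy.1.ne', div_lt_iff₀ hx.1] at hslope

theorem Real.mul_lt_artanh_of_lt {A x y : ℝ} (hx : x ∈ Ioo 0 1) (hy : y ∈ Ioo 0 1) (hxy : x < y)
    (hfix : Real.artanh x = A * x) : A * y < Real.artanh y := by
  have hslope : Real.artanh x / x < Real.artanh y / y :=
    Real.strictMonoOn_artanh_div_self hx hy hxy
  rwa [hfix, mul_div_cancel_right₀ _ hx.1.ne', lt_div_iff₀ hy.1] at hslope

theorem hasDerivAt_mul_sq_sub_entI (A : ℝ) {x : ℝ} (hx : x ∈ Ioo (-1) 1) :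
    HasDerivAt (fun x => A / 2 * x ^ 2 - entI x) (A * x - Real.artanh x) x :=
  (((hasDerivAt_pow 2 x).const_mul (A / 2)).sub (hasDerivAt_entI hx)).congr_deriv (by ring)

theorem isMaxOn_mul_sq_sub_entI {A xt : ℝ} (hxt : xt ∈ Ioo 0 1)
    (hfix : Real.artanh xt = A * xt) :
    IsMaxOn (fun x => A / 2 * x ^ 2 - entI x) (Ico 0 1) xt := by
  have hcont : ContinuousOn (fun x => A / 2 * x ^ 2 - entI x) (Ioo (-1) 1) :=
    fun z hz => (hasDerivAt_mul_sq_sub_entI A hz).continuousAt.continuousWithinAt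
  have hmono : MonotoneOn (fun x => A / 2 * x ^ 2 - entI x) (Icc 0 xt) := by
    have hsub : Icc 0 xt ⊆ Ioo (-1) 1 := fun z hz => ⟨by linarith [hz.1], hz.2.trans_lt hxt.2⟩
    refine monotoneOn_of_deriv_nonneg (convex_Icc 0 xt) (hcont.mono hsub)
      (fun z hz => (hasDerivAt_mul_sq_sub_entI A (hsub (interior_subset hz))).differentiableAt
        |>.differentiableWithinAt) fun z hz => ?_
    rw [interior_Icc] at hz
    rw [(hasDerivAt_mul_sq_sub_entI A (hsub (Ioo_subset_Icc_self hz))).deriv, sub_nonneg]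
    exact (Real.artanh_lt_mul_of_lt ⟨hz.1, hz.2.trans hxt.2⟩ hxt hz.2 hfix).le
  have hanti : AntitoneOn (fun x => A / 2 * x ^ 2 - entI x) (Ico xt 1) := by
    have hsub : Ico xt 1 ⊆ Ioo (-1) 1 := fun z hz => ⟨by linarith [hz.1, hxt.1], hz.2⟩
    refine antitoneOn_of_deriv_nonpos (convex_Ico xt 1) (hcont.mono hsub)
      (fun z hz => (hasDerivAt_mul_sq_sub_entI A (hsub (interior_subset hz))).differentiableAt
        |>.differentiableWithinAt) fun z hz => ?_
    rw [interior_Ico] at hz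
    rw [(hasDerivAt_mul_sq_sub_entI A (hsub (Ioo_subset_Ico_self hz))).deriv, sub_nonpos]
    exact (Real.mul_lt_artanh_of_lt hxt ⟨hxt.1.trans hz.1, hz.2⟩ hz.1 hfix).le
  intro x hx
  rcases le_total x xt with hle | hge
  · exact hmono ⟨hx.1, hle⟩ ⟨hxt.1.le, le_rfl⟩ hle
  · exact hanti ⟨le_rfl, hxt.2⟩ ⟨hge, hx.2⟩ hge

theorem antidiag_max_dominates_general (β J11 J12 xt xh : ℝ)
    (hJ12 : J12 < 0) (hβ0 : 0 < β)
    (hxt : xt ∈ Set.Ioo (0 : ℝ) 1)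
    (hxteq : xt = Real.tanh (β * (J11 - J12) / 2 * xt))
    (hxh : xh ∈ Set.Ioo (0 : ℝ) 1) :
    fSym β J11 J12 (xh, xh) < fSym β J11 J12 (xt, -xt) := by
  have hfix : Real.artanh xt = β * (J11 - J12) / 2 * xt := by
    conv_lhs => rw [hxteq]
    exact Real.artanh_tanh _
  have hmax := isMaxOn_iff.mp (isMaxOn_mul_sq_sub_entI hxt hfix) xh
    (Ioo_subset_Ico_self hxh)
  have hcoupling : β * (J11 + J12) / 4 * xh ^ 2 < β * (J11 - J12) / 4 * xh ^ 2 := by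
    nlinarith [mul_pos (mul_pos hβ0 (neg_pos.2 hJ12)) (pow_pos hxh.1 2)]
  rw [fSym_diag, fSym_antidiag]
  linarith

/-- In the regime β > 2/(β̌λ_M) (with λ_M = J₁₁ − J₁₂, λ_m = J₁₁ + J₁₂ > 0 and β̌ as in
Proposition 2, case 1d), the value of the pressure functional at the maximum point
(x̃,−x̃) exceeds the value at (x̂,x̂). -/
theorem antidiag_max_dominates (β J11 J12 βch xt xh : ℝ)
    (hJ11 : 0 < J11) (hJ12 : J12 < 0) (hlm : 0 < J11 + J12) (hβ0 : 0 < β)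
    (hβch : βch ∈ Set.Ioo (0 : ℝ) 1)
    (hβcheq : βch * artanh (Real.sqrt (1 - βch)) / Real.sqrt (1 - βch)
      = (J11 + J12) / (J11 - J12))
    (hβ : 2 / (βch * (J11 - J12)) < β)
    (hxt : xt ∈ Set.Ioo (0 : ℝ) 1)
    (hxteq : xt = Real.tanh (β * (J11 - J12) / 2 * xt))
    (hxtuniq : ∀ y ∈ Set.Ioo (0 : ℝ) 1, y = Real.tanh (β * (J11 - J12) / 2 * y) → y = xt)
    (hxh : xh ∈ Set.Ioo (0 : ℝ) 1)
    (hxheq : xh = Real.tanh (β * (J11 + J12) / 2 * xh))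
    (hxhuniq : ∀ y ∈ Set.Ioo (0 : ℝ) 1,
      y = Real.tanh (β * (J11 + J12) / 2 * y) → y = xh) :
    fSym β J11 J12 (xh, xh) < fSym β J11 J12 (xt, -xt) :=
  antidiag_max_dominates_general β J11 J12 xt xh hJ12 hβ0 hxt hxteq hxh
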